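/- arXiv:1901.08566 — 3 statements merged into one kernel-verified Lean document; each statement's English description precedes it below -/
import Mathlib

section
/- Let d_A, d_B ≥ 1 and let n ≥ 1. Then every n-outcome POVM M on ℂ^{d_A} ⊗ ℂ^{d_B} ≅ ℂ^{d_A d_B} satisfies R_Sep(M) ≤ min{d_A, d_B}, where Sep is the set of n-outcome separable POVMs. -/
open scoped BigOperators ComplexOrder Kronecker

/-- A POVM with outcome set `κ` on the Hilbert space with orthonormal basis indexed by `ι`:
a tuple of positive semidefinite matrices summing to `1`. -/
def IsPOVM {ι κ : Type*} [Fintype ι] [DecidableEq ι] [Fintype κ]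
    (M : κ → Matrix ι ι ℂ) : Prop :=
  (∀ k, (M k).PosSemidef) ∧ ∑ k, M k = 1

/-- A separable operator on `ℂ^{d_A} ⊗ ℂ^{d_B}`: a finite sum of Kronecker products of
positive semidefinite operators. -/
def IsSepMat {dA dB : ℕ} (X : Matrix (Fin dA × Fin dB) (Fin dA × Fin dB) ℂ) : Prop :=
  ∃ (k : ℕ) (A : Fin k → Matrix (Fin dA) (Fin dA) ℂ) (B : Fin k → Matrix (Fin dB) (Fin dB) ℂ),
    (∀ i, (A i).PosSemidef) ∧ (∀ i, (B i).PosSemidef) ∧ X = ∑ i, A i ⊗ₖ B i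

/-- The set of admissible noise parameters `s ≥ 0` for which some POVM `N` makes
`(M + s N)/(1+s)` a member of `F`. -/
def robustnessSet {ι κ : Type*} [Fintype ι] [DecidableEq ι] [Fintype κ]
    (F : Set (κ → Matrix ι ι ℂ)) (M : κ → Matrix ι ι ℂ) : Set ℝ :=
  {s : ℝ | 0 ≤ s ∧ ∃ N, IsPOVM N ∧
    (fun k => (1 + s)⁻¹ • (M k + s • N k)) ∈ F}

/-- The robustness of `M` with respect to `F`. -/
noncomputable def robustness {ι κ : Type*} [Fintype ι] [DecidableEq ι] [Fintype κ]
    (F : Set (κ → Matrix ι ι ℂ)) (M : κ → Matrix ι ι ℂ) : ℝ :=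
  sInf (robustnessSet F M)

/-- The set of separable POVMs with `n` outcomes on `ℂ^{d_A} ⊗ ℂ^{d_B}`. -/
def SepPOVM (dA dB n : ℕ) : Set (Fin n → Matrix (Fin dA × Fin dB) (Fin dA × Fin dB) ℂ) :=
  {N | IsPOVM N ∧ ∀ i, IsSepMat (N i)}

/-!
Pinching along the first tensor factor, `M ↦ ∑ a, P a * M * P a` with `P a = |a⟩⟨a| ⊗ 1`,
turns every effect into a separable one (its `a`-th term is `|a⟩⟨a| ⊗ M_aa`) and maps POVMs to
POVMs. Expanding `∑ a a', (P a - P a') * M * (P a - P a')ᴴ = 2 (d_A • pinch M - M)` gives the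
pinching inequality `M ≤ d_A • pinch M`, so `N = ((1 + d_A) • pinch M - M) / d_A` is a POVM with
`(M + d_A • N) / (1 + d_A) = pinch M`. Pinching along the second factor gives the bound `d_B`.
-/

open Matrix

section Pinching

variable {𝕜 ι κ : Type*} [RCLike 𝕜] [DecidableEq ι] [DecidableEq κ]

def blockProj (f : ι → κ) (c : κ) : Matrix ι ι 𝕜 :=
  diagonal fun i => if f i = c then 1 else 0

theorem blockProj_posSemidef (f : ι → κ) (c : κ) : (blockProj f c : Matrix ι ι 𝕜).PosSemidef :=
  PosSemidef.diagonal fun i => by dsimp only; split_ifs <;> simp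

theorem blockProj_conjTranspose (f : ι → κ) (c : κ) :
    (blockProj f c : Matrix ι ι 𝕜)ᴴ = blockProj f c :=
  (blockProj_posSemidef f c).1

theorem blockProj_mul_self [Fintype ι] (f : ι → κ) (c : κ) :
    (blockProj f c : Matrix ι ι 𝕜) * blockProj f c = blockProj f c := by
  simp only [blockProj, diagonal_mul_diagonal]
  congr 1; ext i; split_ifs <;> simp

theorem sum_blockProj [Fintype κ] (f : ι → κ) : ∑ c, (blockProj f c : Matrix ι ι 𝕜) = 1 := by
  ext i j
  simp [blockProj, Matrix.sum_apply, diagonal_apply, one_apply]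

theorem blockProj_mul_mul_blockProj_apply [Fintype ι] (f : ι → κ) (c : κ) (M : Matrix ι ι 𝕜)
    (i j : ι) :
    (blockProj f c * M * blockProj f c : Matrix ι ι 𝕜) i j =
      if f i = c ∧ f j = c then M i j else 0 := by
  simp only [blockProj, diagonal_mul, mul_diagonal]
  split_ifs <;> simp_all

variable [Fintype ι] [Fintype κ]

def pinch (f : ι → κ) : Matrix ι ι 𝕜 →ₗ[𝕜] Matrix ι ι 𝕜 :=
  ∑ c, LinearMap.mulLeftRight 𝕜 (blockProj f c, blockProj f c)

theorem pinch_apply (f : ι → κ) (M : Matrix ι ι 𝕜) :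
    pinch f M = ∑ c, blockProj f c * M * blockProj f c := by
  simp [pinch]

theorem pinch_one (f : ι → κ) : pinch f (1 : Matrix ι ι 𝕜) = 1 := by
  simp [pinch_apply, blockProj_mul_self, sum_blockProj]

theorem posSemidef_pinch {M : Matrix ι ι 𝕜} (hM : M.PosSemidef) (f : ι → κ) :
    (pinch f M).PosSemidef := by
  rw [pinch_apply]
  refine posSemidef_sum _ fun c _ => ?_
  simpa only [blockProj_conjTranspose] using hM.mul_mul_conjTranspose_same (blockProj f c)

theorem two_nsmul_card_nsmul_pinch_sub (f : ι → κ) (M : Matrix ι ι 𝕜) :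
    2 • (Fintype.card κ • pinch f M - M) =
      ∑ c, ∑ c', (blockProj f c - blockProj f c') * M * (blockProj f c - blockProj f c')ᴴ := by
  rw [pinch_apply]
  set P : κ → Matrix ι ι 𝕜 := blockProj f
  have expand : ∀ c c', (P c - P c') * M * (P c - P c')ᴴ =
      (P c * M * P c + P c' * M * P c') - (P c * M * P c' + P c' * M * P c) := by
    intro c c'
    simp only [P, conjTranspose_sub, blockProj_conjTranspose]
    noncomm_ring
  have cross : ∑ c, ∑ c', P c * M * P c' = M := by
    simp only [← Finset.mul_sum, ← Finset.sum_mul, P, sum_blockProj, mul_one, one_mul]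
  simp only [expand, Finset.sum_sub_distrib, Finset.sum_add_distrib, Finset.sum_const,
    Finset.card_univ, ← Finset.smul_sum, cross]
  rw [Finset.sum_comm, cross]
  simp only [smul_sub, two_nsmul]

theorem posSemidef_card_nsmul_pinch_sub {M : Matrix ι ι 𝕜} (hM : M.PosSemidef) (f : ι → κ) :
    (Fintype.card κ • pinch f M - M).PosSemidef := by
  have h2 : (2 • (Fintype.card κ • pinch f M - M)).PosSemidef := by
    rw [two_nsmul_card_nsmul_pinch_sub]
    exact posSemidef_sum _ fun c _ => posSemidef_sum _ fun c' _ =>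
      hM.mul_mul_conjTranspose_same _
  have half : (2 : ℝ)⁻¹ • 2 • (Fintype.card κ • pinch f M - M) =
      Fintype.card κ • pinch f M - M := by
    rw [← Nat.cast_smul_eq_nsmul ℝ 2, smul_smul]; norm_num
  simpa only [half] using h2.smul (show (0 : ℝ) ≤ 2⁻¹ by norm_num)

end Pinching

section Robustness

variable {ι κ μ : Type*} [Fintype ι] [DecidableEq ι] [Fintype μ]

theorem robustness_le_of_mem {F : Set (μ → Matrix ι ι ℂ)}
    {M : μ → Matrix ι ι ℂ} {s : ℝ} (hs : s ∈ robustnessSet F M) : robustness F M ≤ s :=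
  csInf_le ⟨0, fun _ ht => ht.1⟩ hs

theorem IsPOVM.pinch [Fintype κ] [DecidableEq κ] {M : μ → Matrix ι ι ℂ}
    (hM : IsPOVM M) (f : ι → κ) : IsPOVM fun k => pinch f (M k) :=
  ⟨fun k => posSemidef_pinch (hM.1 k) f, by rw [← map_sum, hM.2, pinch_one]⟩

theorem mem_robustnessSet_of_posSemidef_sub {F : Set (μ → Matrix ι ι ℂ)}
    {M M' : μ → Matrix ι ι ℂ} {s : ℝ} (hs : 0 < s) (hM : ∑ k, M k = 1) (hM' : ∑ k, M' k = 1)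
    (hle : ∀ k, ((1 + s) • M' k - M k).PosSemidef) (hF : M' ∈ F) :
    s ∈ robustnessSet F M := by
  refine ⟨hs.le, fun k => s⁻¹ • ((1 + s) • M' k - M k),
    ⟨fun k => (hle k).smul (by positivity), ?_⟩, ?_⟩
  · rw [← Finset.smul_sum, Finset.sum_sub_distrib, ← Finset.smul_sum, hM, hM', add_smul, one_smul,
      add_sub_cancel_left, inv_smul_smul₀ hs.ne']
  · convert hF using 2 with k
    rw [smul_inv_smul₀ hs.ne', add_sub_cancel, inv_smul_smul₀ (by positivity)]

theorem card_mem_robustnessSet_of_pinch_mem [Fintype κ] [DecidableEq κ] [Nonempty κ]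
    {F : Set (μ → Matrix ι ι ℂ)} {M : μ → Matrix ι ι ℂ} (hM : IsPOVM M) (f : ι → κ)
    (hF : (fun k => pinch f (M k)) ∈ F) : (Fintype.card κ : ℝ) ∈ robustnessSet F M := by
  refine mem_robustnessSet_of_posSemidef_sub (by positivity) hM.2 (hM.pinch f).2 (fun k => ?_) hF
  rw [add_smul, one_smul, Nat.cast_smul_eq_nsmul, add_sub_assoc]
  exact (posSemidef_pinch (hM.1 k) f).add (posSemidef_card_nsmul_pinch_sub (hM.1 k) f)

end Robustness

section Separable

variable {dA dB : ℕ}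

theorem isSepMat_pinch_fst {M : Matrix (Fin dA × Fin dB) (Fin dA × Fin dB) ℂ}
    (hM : M.PosSemidef) : IsSepMat (pinch Prod.fst M) := by
  refine ⟨dA, blockProj id, fun a => M.submatrix (a, ·) (a, ·), blockProj_posSemidef id,
    fun a => hM.submatrix _, ?_⟩
  rw [pinch_apply]
  refine Finset.sum_congr rfl fun a _ => ?_
  ext ⟨p, b⟩ ⟨q, b'⟩
  rw [blockProj_mul_mul_blockProj_apply, kroneckerMap_apply]
  simp only [blockProj, diagonal_apply, id]
  split_ifs <;> simp_all

theorem isSepMat_pinch_snd {M : Matrix (Fin dA × Fin dB) (Fin dA × Fin dB) ℂ}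
    (hM : M.PosSemidef) : IsSepMat (pinch Prod.snd M) := by
  refine ⟨dB, fun b => M.submatrix (·, b) (·, b), blockProj id, fun b => hM.submatrix _,
    blockProj_posSemidef id, ?_⟩
  rw [pinch_apply]
  refine Finset.sum_congr rfl fun b _ => ?_
  ext ⟨p, b₁⟩ ⟨q, b₂⟩
  rw [blockProj_mul_mul_blockProj_apply, kroneckerMap_apply]
  simp only [blockProj, diagonal_apply, id]
  split_ifs <;> simp_all

end Separable

theorem robustness_sep_le_general {dA dB n : ℕ} (hA : 1 ≤ dA) (hB : 1 ≤ dB)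
    (M : Fin n → Matrix (Fin dA × Fin dB) (Fin dA × Fin dB) ℂ) (hM : IsPOVM M) :
    robustness (SepPOVM dA dB n) M ≤ min (dA : ℝ) (dB : ℝ) := by
  have : Nonempty (Fin dA) := Fin.pos_iff_nonempty.mp hA
  have : Nonempty (Fin dB) := Fin.pos_iff_nonempty.mp hB
  refine le_min ?_ ?_
  · have hsep : (fun k => pinch Prod.fst (M k)) ∈ SepPOVM dA dB n :=
      ⟨hM.pinch _, fun k => isSepMat_pinch_fst (hM.1 k)⟩
    simpa using robustness_le_of_mem (card_mem_robustnessSet_of_pinch_mem hM Prod.fst hsep)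
  · have hsep : (fun k => pinch Prod.snd (M k)) ∈ SepPOVM dA dB n :=
      ⟨hM.pinch _, fun k => isSepMat_pinch_snd (hM.1 k)⟩
    simpa using robustness_le_of_mem (card_mem_robustnessSet_of_pinch_mem hM Prod.snd hsep)

/-- Every `n`-outcome POVM on `ℂ^{d_A} ⊗ ℂ^{d_B}` has robustness at most `min{d_A, d_B}`
with respect to separable POVMs. -/
theorem robustness_sep_le {dA dB n : ℕ} (hA : 1 ≤ dA) (hB : 1 ≤ dB) (hn : 1 ≤ n)
    (M : Fin n → Matrix (Fin dA × Fin dB) (Fin dA × Fin dB) ℂ) (hM : IsPOVM M) :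
    robustness (SepPOVM dA dB n) M ≤ min (dA : ℝ) (dB : ℝ) :=
  robustness_sep_le_general hA hB M hM
end

section
/- Let D ≥ 1 and for n, m ∈ {0, …, D−1} let |Ψ_{nm}⟩ = (1/√D) Σ_{j=0}^{D−1} e^{2πi jn/D} |j⟩ ⊗ |(j+m) mod D⟩ be the maximally entangled basis of ℂ^D ⊗ ℂ^D, with Ψ_{nm} = |Ψ_{nm}⟩⟨Ψ_{nm}|. Then for every separable D²-outcome POVM N = (N_{nm})_{n,m=0}^{D−1} on ℂ^D ⊗ ℂ^D ≅ ℂ^{D²}, the success probability of discriminating the uniform ensemble of these states satisfies (1/D²) Σ_{n,m=0}^{D−1} tr(Ψ_{nm} N_{nm}) ≤ 1/D. -/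
/-!
For PSD `A = SᴴS` and `B = TᴴT`, `⟨Ψ|A ⊗ B|Ψ⟩ = ‖(S ⊗ T)Ψ‖²`. The coefficient matrix `Ψ(j, k)` of a
maximally entangled basis vector is `D^{-1/2}` times a phased permutation matrix, so each entry of
`(S ⊗ T)Ψ` is a single sum `Σ_j S_{lj} T_{r,σj} Ψ(j, σj)`, and Cauchy–Schwarz gives
`⟨Ψ|A ⊗ B|Ψ⟩ ≤ tr A · tr B / D`. Summing over the product terms, `tr(Ψ_p N_p) ≤ tr N_p / D` for
every separable effect, and `Σ_p tr N_p = tr 1 = D²`.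
-/

open scoped BigOperators ComplexOrder Kronecker

/-- The maximally entangled vector
`|Ψ_{nm}⟩ = (1/√D) Σ_j e^{2πi jn/D} |j⟩ ⊗ |(j+m) mod D⟩` of `ℂ^D ⊗ ℂ^D`. -/
noncomputable def entVec (D : ℕ) [NeZero D] (nm : Fin D × Fin D) : Fin D × Fin D → ℂ :=
  fun jk =>
    if jk.2 = jk.1 + nm.2 then
      ((Real.sqrt D : ℝ) : ℂ)⁻¹ *
        Complex.exp (2 * Real.pi * Complex.I * (jk.1.val : ℂ) * (nm.1.val : ℂ) / (D : ℂ))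
    else 0

/-- The rank-one projector `Ψ_{nm} = |Ψ_{nm}⟩⟨Ψ_{nm}|`. -/
noncomputable def entProj (D : ℕ) [NeZero D] (nm : Fin D × Fin D) :
    Matrix (Fin D × Fin D) (Fin D × Fin D) ℂ :=
  Matrix.of fun x y => entVec D nm x * (starRingEnd ℂ) (entVec D nm y)

open Matrix

section Kronecker

variable {ι κ α β : Type*} [Fintype ι] [Fintype κ]

lemma re_star_dotProduct_self (w : ι → ℂ) : (star w ⬝ᵥ w).re = ∑ i, ‖w i‖ ^ 2 := by
  simp only [dotProduct, Pi.star_apply, RCLike.star_def, Complex.conj_mul', Complex.re_sum]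
  norm_cast

lemma re_trace_conjTranspose_mul_self [Fintype α] (S : Matrix α ι ℂ) :
    (Sᴴ * S).trace.re = ∑ l, ∑ j, ‖S l j‖ ^ 2 := by
  rw [← star_vec_dotProduct_vec, re_star_dotProduct_self, Fintype.sum_prod_type,
    Finset.sum_comm]
  rfl

lemma re_trace_kronecker {A : Matrix ι ι ℂ} (hA : A.PosSemidef) (B : Matrix κ κ ℂ) :
    (A ⊗ₖ B).trace.re = A.trace.re * B.trace.re := by
  rw [trace_kronecker, Complex.mul_re, ← (Complex.nonneg_iff.mp hA.trace_nonneg).2,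
    zero_mul, sub_zero]

lemma Matrix.PosSemidef.exists_eq_conjTranspose_mul_self [DecidableEq ι] {A : Matrix ι ι ℂ}
    (hA : A.PosSemidef) : ∃ S : Matrix ι ι ℂ, A = Sᴴ * S := by
  open scoped MatrixOrder Matrix.Norms.L2Operator in
  exact CStarAlgebra.nonneg_iff_eq_star_mul_self.mp hA.nonneg

lemma norm_sum_mul_mul_sq_le (a b z : ι → ℂ) {c : ℝ} (hz : ∀ j, ‖z j‖ ^ 2 ≤ c) :
    ‖∑ j, a j * b j * z j‖ ^ 2 ≤ c * ((∑ j, ‖a j‖ ^ 2) * ∑ j, ‖b j‖ ^ 2) := by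
  calc ‖∑ j, a j * b j * z j‖ ^ 2 ≤ (∑ j, ‖a j‖ * ‖b j * z j‖) ^ 2 := by
        gcongr
        refine (norm_sum_le _ _).trans_eq ?_
        simp only [mul_assoc, norm_mul]
    _ ≤ (∑ j, ‖a j‖ ^ 2) * ∑ j, ‖b j * z j‖ ^ 2 := Finset.sum_mul_sq_le_sq_mul_sq _ _ _
    _ ≤ (∑ j, ‖a j‖ ^ 2) * ∑ j, c * ‖b j‖ ^ 2 := by
        gcongr with j
        rw [norm_mul, mul_pow, mul_comm]
        gcongr
        exact hz j
    _ = c * ((∑ j, ‖a j‖ ^ 2) * ∑ j, ‖b j‖ ^ 2) := by rw [← Finset.mul_sum]; ring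

variable (σ : ι ≃ κ) {ψ : ι × κ → ℂ}

lemma kronecker_mulVec_apply_of_support (hψ : ∀ j k, k ≠ σ j → ψ (j, k) = 0)
    (S : Matrix α ι ℂ) (T : Matrix β κ ℂ) (l : α) (r : β) :
    ((S ⊗ₖ T) *ᵥ ψ) (l, r) = ∑ j, S l j * T r (σ j) * ψ (j, σ j) := by
  simp only [mulVec, dotProduct, kroneckerMap_apply, Fintype.sum_prod_type]
  refine Finset.sum_congr rfl fun j _ => Finset.sum_eq_single (σ j) ?_ (by simp)
  intro k _ hk
  rw [hψ j k hk, mul_zero]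

lemma re_star_dotProduct_kronecker_mulVec_le [DecidableEq ι] [DecidableEq κ]
    (hψ : ∀ j k, k ≠ σ j → ψ (j, k) = 0) {c : ℝ} (hc : ∀ j, ‖ψ (j, σ j)‖ ^ 2 ≤ c)
    {A : Matrix ι ι ℂ} {B : Matrix κ κ ℂ}
    (hA : A.PosSemidef) (hB : B.PosSemidef) :
    (star ψ ⬝ᵥ ((A ⊗ₖ B) *ᵥ ψ)).re ≤ c * (A.trace.re * B.trace.re) := by
  obtain ⟨S, rfl⟩ := hA.exists_eq_conjTranspose_mul_self
  obtain ⟨T, rfl⟩ := hB.exists_eq_conjTranspose_mul_self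
  have hquad : star ψ ⬝ᵥ (((Sᴴ * S) ⊗ₖ (Tᴴ * T)) *ᵥ ψ)
      = star ((S ⊗ₖ T) *ᵥ ψ) ⬝ᵥ ((S ⊗ₖ T) *ᵥ ψ) := by
    rw [mul_kronecker_mul, ← conjTranspose_kronecker, ← mulVec_mulVec, dotProduct_mulVec,
      ← star_mulVec]
  rw [hquad, re_star_dotProduct_self, re_trace_conjTranspose_mul_self,
    re_trace_conjTranspose_mul_self, Finset.sum_mul_sum, Finset.mul_sum, Fintype.sum_prod_type]
  refine Finset.sum_le_sum fun l _ => ?_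
  rw [Finset.mul_sum]
  refine Finset.sum_le_sum fun r _ => ?_
  rw [kronecker_mulVec_apply_of_support σ hψ, ← (σ.sum_comp fun k => ‖T r k‖ ^ 2)]
  exact norm_sum_mul_mul_sq_le _ _ _ hc

end Kronecker

lemma re_star_dotProduct_mulVec_le_of_isSepMat {dA dB : ℕ} (σ : Fin dA ≃ Fin dB)
    {ψ : Fin dA × Fin dB → ℂ} (hψ : ∀ j k, k ≠ σ j → ψ (j, k) = 0) {c : ℝ}
    (hc : ∀ j, ‖ψ (j, σ j)‖ ^ 2 ≤ c) {X : Matrix (Fin dA × Fin dB) (Fin dA × Fin dB) ℂ}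
    (hX : IsSepMat X) : (star ψ ⬝ᵥ (X *ᵥ ψ)).re ≤ c * X.trace.re := by
  obtain ⟨k, A, B, hA, hB, rfl⟩ := hX
  simp only [sum_mulVec, dotProduct_sum, trace_sum, Complex.re_sum, Finset.mul_sum,
    re_trace_kronecker (hA _)]
  exact Finset.sum_le_sum fun i _ => re_star_dotProduct_kronecker_mulVec_le σ hψ hc (hA i) (hB i)

section EntangledBasis

variable (D : ℕ) [NeZero D] (p : Fin D × Fin D)

lemma entVec_apply_of_ne {j k : Fin D} (h : k ≠ j + p.2) : entVec D p (j, k) = 0 := if_neg h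

lemma norm_entVec_sq (j : Fin D) : ‖entVec D p (j, j + p.2)‖ ^ 2 = (D : ℝ)⁻¹ := by
  have hphase : 2 * Real.pi * Complex.I * (j.val : ℂ) * (p.1.val : ℂ) / (D : ℂ)
      = ((2 * Real.pi * j.val * p.1.val / D : ℝ) : ℂ) * Complex.I := by
    push_cast; ring
  rw [entVec, if_pos rfl, hphase, norm_mul, Complex.norm_exp_ofReal_mul_I, mul_one, norm_inv,
    Complex.norm_real, Real.norm_of_nonneg (Real.sqrt_nonneg _), inv_pow,
    Real.sq_sqrt (Nat.cast_nonneg D)]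

lemma trace_entProj_mul (M : Matrix (Fin D × Fin D) (Fin D × Fin D) ℂ) :
    (entProj D p * M).trace = star (entVec D p) ⬝ᵥ (M *ᵥ entVec D p) := by
  rw [show entProj D p = vecMulVec (entVec D p) (star (entVec D p)) from rfl, vecMulVec_mul,
    trace_vecMulVec, dotProduct_comm, dotProduct_mulVec]

lemma re_trace_entProj_mul_le {M : Matrix (Fin D × Fin D) (Fin D × Fin D) ℂ}
    (hM : IsSepMat M) : (entProj D p * M).trace.re ≤ (D : ℝ)⁻¹ * M.trace.re := by
  rw [trace_entProj_mul]
  exact re_star_dotProduct_mulVec_le_of_isSepMat (Equiv.addRight p.2)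
    (fun _ _ => entVec_apply_of_ne D p) (fun j => (norm_entVec_sq D p j).le) hM

end EntangledBasis

/-- No separable POVM can discriminate the uniform ensemble of the `D²` maximally
entangled basis states with success probability greater than `1/D`. -/
theorem sep_povm_entangled_basis_bound (D : ℕ) [NeZero D]
    (N : Fin D × Fin D → Matrix (Fin D × Fin D) (Fin D × Fin D) ℂ)
    (hN : IsPOVM N) (hsep : ∀ p, IsSepMat (N p)) :
    (1 / (D : ℝ) ^ 2) * ∑ p, ((entProj D p * N p).trace).re ≤ 1 / (D : ℝ) := by
  have hD : (D : ℝ) ≠ 0 := Nat.cast_ne_zero.mpr (NeZero.ne D)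
  have htrace : ∑ p, (N p).trace.re = (D : ℝ) ^ 2 := by
    rw [← Complex.re_sum, ← trace_sum, hN.2, trace_one]
    simp [sq]
  calc (1 / (D : ℝ) ^ 2) * ∑ p, ((entProj D p * N p).trace).re
      ≤ 1 / (D : ℝ) ^ 2 * ∑ p, (D : ℝ)⁻¹ * (N p).trace.re := by
        gcongr with p
        exact re_trace_entProj_mul_le D p (hsep p)
    _ = 1 / (D : ℝ) := by
        rw [← Finset.mul_sum, htrace]
        field_simp
end

section
/- Let N ≥ 1, d = 2^N, and let Ψ_1, …, Ψ_m be rank-one projectors onto unit vectors of (ℂ²)^{⊗N} ≅ ℂ^{2^N}. Suppose ε > 0 is such that tr(φ Ψ_i) ≤ ε for every i and every rank-one projector φ onto a product unit vector φ_1 ⊗ ⋯ ⊗ φ_N. Then every m-outcome POVM (N_1, …, N_m) on ℂ^{2^N} all of whose effects are N-qubit separable satisfies (1/m) Σ_{i=1}^m tr(Ψ_i N_i) ≤ ε · 2^N / m. -/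
open scoped BigOperators ComplexOrder

/-- An elementary product operator on `N` qubits: an `N`-fold Kronecker product
`A_1 ⊗ ⋯ ⊗ A_N` of positive semidefinite `2×2` matrices. -/
def IsProdPSD {N : ℕ} (X : Matrix (Fin N → Fin 2) (Fin N → Fin 2) ℂ) : Prop :=
  ∃ A : Fin N → Matrix (Fin 2) (Fin 2) ℂ,
    (∀ t, (A t).PosSemidef) ∧ ∀ x y, X x y = ∏ t, A t (x t) (y t)

/-- An `N`-qubit separable operator: a finite sum of elementary product operators. -/
def IsNSep {N : ℕ} (X : Matrix (Fin N → Fin 2) (Fin N → Fin 2) ℂ) : Prop :=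
  ∃ (k : ℕ) (Y : Fin k → Matrix (Fin N → Fin 2) (Fin N → Fin 2) ℂ),
    (∀ i, IsProdPSD (Y i)) ∧ X = ∑ i, Y i

/-!
Expanding each Kronecker factor of a product effect `A_1 ⊗ ⋯ ⊗ A_N` in its eigenbasis writes it
as a nonnegative combination `∑ c_f φ_f` of product pure states `φ_f` of trace one, so
`tr(Ψ_i X) ≤ ε tr X` for every separable `X`. Summing over the outcomes and using
`∑ N_i = I` gives `∑ tr(Ψ_i N_i) ≤ ε tr I = ε 2^N`.
-/

namespace Matrix

section piKronecker

variable {τ ι R : Type*} [Fintype τ] [CommSemiring R]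

-- `u_1 ⊗ ⋯ ⊗ u_N` and `A_1 ⊗ ⋯ ⊗ A_N`, with the tensor-product basis indexed by `τ → ι`.
def piKroneckerVec (u : τ → ι → R) : (τ → ι) → R :=
  fun x => ∏ t, u t (x t)

def piKronecker (A : τ → Matrix ι ι R) : Matrix (τ → ι) (τ → ι) R :=
  of fun x y => ∏ t, A t (x t) (y t)

theorem piKronecker_sum [DecidableEq τ] {κ : Type*} [Fintype κ] (B : τ → κ → Matrix ι ι R) :
    piKronecker (fun t => ∑ j, B t j) = ∑ f : τ → κ, piKronecker fun t => B t (f t) := by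
  ext x y
  simp [piKronecker, sum_apply, Finset.prod_univ_sum]

theorem piKronecker_smul (c : τ → R) (A : τ → Matrix ι ι R) :
    piKronecker (fun t => c t • A t) = (∏ t, c t) • piKronecker A := by
  ext x y
  simp [piKronecker, Finset.prod_mul_distrib]

theorem piKronecker_vecMulVec (u v : τ → ι → R) :
    piKronecker (fun t => vecMulVec (u t) (v t)) =
      vecMulVec (piKroneckerVec u) (piKroneckerVec v) := by
  ext x y
  simp [piKronecker, piKroneckerVec, vecMulVec_apply, Finset.prod_mul_distrib]

theorem sum_normSq_piKroneckerVec [DecidableEq τ] [Fintype ι] (u : τ → ι → ℂ) :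
    ∑ x, Complex.normSq (piKroneckerVec u x) = ∏ t, ∑ s, Complex.normSq (u t s) := by
  simp [piKroneckerVec, Finset.prod_univ_sum]

end piKronecker

theorem IsHermitian.eq_sum_eigenvalues_smul_vecMulVec {𝕜 n : Type*} [RCLike 𝕜] [Fintype n]
    [DecidableEq n] {A : Matrix n n 𝕜} (hA : A.IsHermitian) :
    A = ∑ j, (hA.eigenvalues j : 𝕜) •
      vecMulVec ⇑(hA.eigenvectorBasis j) (star ⇑(hA.eigenvectorBasis j)) := by
  conv_lhs => rw [hA.spectral_theorem]
  ext x y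
  simp only [Unitary.conjStarAlgAut_apply, mul_apply, eigenvectorUnitary_apply, diagonal_apply,
    Function.comp_apply, mul_ite, mul_zero, Finset.sum_ite_eq', Finset.mem_univ, ↓reduceIte,
    star_apply, RCLike.star_def, sum_apply, smul_apply, vecMulVec_apply, Pi.star_apply]
  exact Finset.sum_congr rfl fun j _ => by ring

theorem trace_vecMulVec_star_eq_sum_normSq {n : Type*} [Fintype n] (v : n → ℂ) :
    (vecMulVec v (star v)).trace = ∑ s, (Complex.normSq (v s) : ℂ) := by
  simp [dotProduct, Complex.mul_conj]

section ProductStates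

variable {τ ι : Type*} [Fintype τ] [DecidableEq τ] [Fintype ι] [DecidableEq ι]

theorem exists_piKronecker_eq_sum_smul_vecMulVec_piKroneckerVec {A : τ → Matrix ι ι ℂ}
    (hA : ∀ t, (A t).PosSemidef) :
    ∃ (c : (τ → ι) → ℝ) (u : (τ → ι) → τ → ι → ℂ),
      (∀ f, 0 ≤ c f) ∧ (∀ f t, ∑ s, Complex.normSq (u f t s) = 1) ∧
      piKronecker A = ∑ f, (c f : ℂ) •
        vecMulVec (piKroneckerVec (u f)) (star (piKroneckerVec (u f))) := by
  have hunit : ∀ t j, ∑ s, Complex.normSq ((hA t).isHermitian.eigenvectorBasis j s) = 1 := by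
    intro t j
    have h := (hA t).isHermitian.eigenvectorBasis.norm_eq_one j
    rw [EuclideanSpace.norm_eq, Real.sqrt_eq_one] at h
    simpa [Complex.normSq_eq_norm_sq] using h
  refine ⟨fun f => ∏ t, (hA t).isHermitian.eigenvalues (f t),
    fun f t => ⇑((hA t).isHermitian.eigenvectorBasis (f t)),
    fun f => Finset.prod_nonneg fun t _ => (hA t).eigenvalues_nonneg _,
    fun f t => hunit t (f t), ?_⟩
  conv_lhs => rw [funext fun t => (hA t).isHermitian.eq_sum_eigenvalues_smul_vecMulVec]
  rw [piKronecker_sum]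
  refine Finset.sum_congr rfl fun f _ => ?_
  rw [piKronecker_smul, piKronecker_vecMulVec]
  push_cast
  congr 2
  ext y
  simp [piKroneckerVec, star_prod]

theorem re_trace_piKronecker_mul_le (Ψ : Matrix (τ → ι) (τ → ι) ℂ) {ε : ℝ}
    (hover : ∀ u : τ → ι → ℂ, (∀ t, ∑ s, Complex.normSq (u t s) = 1) →
      ((vecMulVec (piKroneckerVec u) (star (piKroneckerVec u)) * Ψ).trace).re ≤ ε)
    {A : τ → Matrix ι ι ℂ} (hA : ∀ t, (A t).PosSemidef) :
    ((piKronecker A * Ψ).trace).re ≤ ε * (piKronecker A).trace.re := by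
  obtain ⟨c, u, hc, hu, hAc⟩ := exists_piKronecker_eq_sum_smul_vecMulVec_piKroneckerVec hA
  have htrace : ∀ f,
      (vecMulVec (piKroneckerVec (u f)) (star (piKroneckerVec (u f)))).trace = 1 := by
    intro f
    rw [trace_vecMulVec_star_eq_sum_normSq, ← Complex.ofReal_sum, sum_normSq_piKroneckerVec]
    simp [hu f]
  rw [hAc, Finset.sum_mul, trace_sum, trace_sum, Complex.re_sum, Complex.re_sum, Finset.mul_sum]
  refine Finset.sum_le_sum fun f _ => ?_
  simp only [smul_mul, trace_smul, htrace, smul_eq_mul, Complex.re_ofReal_mul, mul_one]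
  rw [mul_comm ε]
  exact mul_le_mul_of_nonneg_left (hover _ (hu f)) (hc f)

end ProductStates

end Matrix

open Matrix in
theorem IsNSep.re_trace_mul_le {N : ℕ} {X : Matrix (Fin N → Fin 2) (Fin N → Fin 2) ℂ}
    (hX : IsNSep X) (Ψ : Matrix (Fin N → Fin 2) (Fin N → Fin 2) ℂ) {ε : ℝ}
    (hover : ∀ u : Fin N → Fin 2 → ℂ, (∀ t, ∑ s, Complex.normSq (u t s) = 1) →
      ((vecMulVec (piKroneckerVec u) (star (piKroneckerVec u)) * Ψ).trace).re ≤ ε) :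
    ((X * Ψ).trace).re ≤ ε * X.trace.re := by
  obtain ⟨k, Y, hY, rfl⟩ := hX
  simp only [Finset.sum_mul, trace_sum, Complex.re_sum, Finset.mul_sum]
  refine Finset.sum_le_sum fun j _ => ?_
  obtain ⟨A, hA, hYA⟩ := hY j
  rw [show Y j = piKronecker A from ext hYA]
  exact re_trace_piKronecker_mul_le Ψ hover hA

theorem sep_povm_haar_bound_general (N m : ℕ)
    (Ψ : Fin m → Matrix (Fin N → Fin 2) (Fin N → Fin 2) ℂ)
    (ε : ℝ)
    (hover : ∀ i, ∀ u : Fin N → Fin 2 → ℂ, (∀ t, (∑ s, Complex.normSq (u t s)) = 1) →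
      ((Matrix.of (fun x y : Fin N → Fin 2 =>
          (∏ t, u t (x t)) * (starRingEnd ℂ) (∏ t, u t (y t))) * Ψ i).trace).re ≤ ε)
    (Nv : Fin m → Matrix (Fin N → Fin 2) (Fin N → Fin 2) ℂ)
    (hPOVM : IsPOVM Nv) (hsep : ∀ i, IsNSep (Nv i)) :
    (1 / (m : ℝ)) * ∑ i, ((Ψ i * Nv i).trace).re ≤ ε * 2 ^ N / m := by
  have hbound : ∀ i, ((Ψ i * Nv i).trace).re ≤ ε * (Nv i).trace.re := fun i => by
    rw [Matrix.trace_mul_comm]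
    exact (hsep i).re_trace_mul_le (Ψ i) (hover i)
  calc (1 / (m : ℝ)) * ∑ i, ((Ψ i * Nv i).trace).re
      ≤ (1 / (m : ℝ)) * ∑ i, ε * (Nv i).trace.re := by gcongr with i; exact hbound i
    _ = (1 / (m : ℝ)) * (ε * (∑ i, Nv i).trace.re) := by
      rw [Matrix.trace_sum, Complex.re_sum, ← Finset.mul_sum]
    _ = ε * 2 ^ N / m := by
      rw [hPOVM.2, Matrix.trace_one, Complex.natCast_re]
      simp only [Fintype.card_fun, Fintype.card_fin]
      push_cast
      ring

/-- If each of the pure states `Ψ_1, …, Ψ_m` on `N` qubits has overlap at most `ε` with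
every product pure state, then no separable POVM can discriminate the uniform ensemble
of these states with success probability greater than `ε · 2^N / m`. -/
theorem sep_povm_haar_bound (N m : ℕ) (hN : 1 ≤ N) (hm : 1 ≤ m)
    (Ψ : Fin m → Matrix (Fin N → Fin 2) (Fin N → Fin 2) ℂ)
    (hΨ : ∀ i, ∃ v : (Fin N → Fin 2) → ℂ,
      (∑ x, Complex.normSq (v x)) = 1 ∧
      Ψ i = Matrix.of fun x y => v x * (starRingEnd ℂ) (v y))
    (ε : ℝ) (hε : 0 < ε)
    (hover : ∀ i, ∀ u : Fin N → Fin 2 → ℂ, (∀ t, (∑ s, Complex.normSq (u t s)) = 1) →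
      ((Matrix.of (fun x y : Fin N → Fin 2 =>
          (∏ t, u t (x t)) * (starRingEnd ℂ) (∏ t, u t (y t))) * Ψ i).trace).re ≤ ε)
    (Nv : Fin m → Matrix (Fin N → Fin 2) (Fin N → Fin 2) ℂ)
    (hPOVM : IsPOVM Nv) (hsep : ∀ i, IsNSep (Nv i)) :
    (1 / (m : ℝ)) * ∑ i, ((Ψ i * Nv i).trace).re ≤ ε * 2 ^ N / m :=
  sep_povm_haar_bound_general N m Ψ ε hover Nv hPOVM hsep
end
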